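/- arXiv:2202.01590 — 2 statements merged into one kernel-verified Lean document; each statement's English description precedes it below -/
import Mathlib

section
/- For every fixed t ∈ (0, t₀), the function (x,λ) ↦ L_{t,λ}(x) is lower semicontinuous on Ω'' × [0,1]. -/
open Metric Filter Set Topology

/-- The Hopf–Lax-type function `f_t(x,λ) = inf_{y ∈ Ω'} { e^{-2Kλ} d(x,y)²/(2t) - d_Y(u(x),u(y)) }`. -/
noncomputable def fT {X Y : Type*} [MetricSpace X] [MetricSpace Y]
    (Ω' : Set X) (u : X → Y) (K t lam : ℝ) (x : X) : ℝ :=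
  ⨅ y : Ω', (Real.exp (-2 * K * lam) * dist x (y : X) ^ 2 / (2 * t) - dist (u x) (u (y : X)))

/-- The set `S_t(x,λ)` of points of `Ω'` attaining the infimum defining `f_t(x,λ)`. -/
noncomputable def minSet {X Y : Type*} [MetricSpace X] [MetricSpace Y]
    (Ω' : Set X) (u : X → Y) (K t lam : ℝ) (x : X) : Set X :=
  {y ∈ Ω' | fT Ω' u K t lam x
    = Real.exp (-2 * K * lam) * dist x y ^ 2 / (2 * t) - dist (u x) (u y)}

/-- `L_{t,λ}(x) := min { d(x,y) : y ∈ S_t(x,λ) }` (as an infimum, which is attained). -/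
noncomputable def minDist {X Y : Type*} [MetricSpace X] [MetricSpace Y]
    (Ω' : Set X) (u : X → Y) (K t lam : ℝ) (x : X) : ℝ :=
  sInf ((fun y => dist x y) '' minSet Ω' u K t lam x)

/-!
For `t < t₀` the cost `y ↦ e^{-2Kλ} d(x,y)²/(2t) - d_Y(u x, u y)` vanishes at `y = x` and is
positive outside the ball of radius `D/2` around `x ∈ Ω''`, so minimizers exist by compactness and
lie in that ball. Given `c < L_{t,λ}(x)`, pick `c < r < L_{t,λ}(x)`: every `y` in the compact ball
`closedBall x r` is strictly suboptimal for `(x, λ)`. Strict suboptimality is an open condition in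
`((x, λ), y)`, since the cost is continuous and `f_t`, an infimum of continuous functions, is upper
semicontinuous. By the tube lemma it holds on the whole ball for all `(x', λ')` near `(x, λ)`, so
every minimizer for `(x', λ')` is farther than `r` from `x`, hence farther than `c` from `x'`.
-/

noncomputable def hopfLaxCost {X Y : Type*} [MetricSpace X] [MetricSpace Y]
    (u : X → Y) (K t lam : ℝ) (x y : X) : ℝ :=
  Real.exp (-2 * K * lam) * dist x y ^ 2 / (2 * t) - dist (u x) (u y)

section HopfLax

variable {X Y : Type*} [MetricSpace X] [MetricSpace Y] {Ω' : Set X} {u : X → Y}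
  {K t lam M ρ : ℝ} {x y : X}

theorem mem_minSet_iff :
    y ∈ minSet Ω' u K t lam x ↔ y ∈ Ω' ∧ fT Ω' u K t lam x = hopfLaxCost u K t lam x y :=
  Iff.rfl

@[simp]
theorem hopfLaxCost_self : hopfLaxCost u K t lam x x = 0 := by
  simp [hopfLaxCost]

theorem continuousAt_hopfLaxCost (hx : ContinuousAt u x) (hy : ContinuousAt u y) :
    ContinuousAt (fun q : (X × ℝ) × X => hopfLaxCost u K t q.1.2 q.1.1 q.2) ((x, lam), y) := by
  unfold hopfLaxCost
  have hux : ContinuousAt (fun q : (X × ℝ) × X => u q.1.1) ((x, lam), y) :=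
    hx.comp (continuous_fst.comp continuous_fst).continuousAt
  have huy : ContinuousAt (fun q : (X × ℝ) × X => u q.2) ((x, lam), y) :=
    hy.comp continuous_snd.continuousAt
  exact ContinuousAt.sub (by fun_prop) (hux.dist huy)

theorem neg_le_hopfLaxCost (ht : 0 ≤ t) (hxy : dist (u x) (u y) ≤ M) :
    -M ≤ hopfLaxCost u K t lam x y := by
  have : 0 ≤ Real.exp (-2 * K * lam) * dist x y ^ 2 / (2 * t) := by positivity
  unfold hopfLaxCost
  linarith

theorem hopfLaxCost_pos_of_le_dist (ht : 0 < t) (hKlam : K * lam ≤ 0)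
    (hxy : dist (u x) (u y) ≤ M) (hρ : 2 * t * M < ρ ^ 2) (hρ0 : 0 ≤ ρ) (hρy : ρ ≤ dist x y) :
    0 < hopfLaxCost u K t lam x y := by
  have hexp : 1 ≤ Real.exp (-2 * K * lam) := Real.one_le_exp (by linarith)
  have hsq : ρ ^ 2 ≤ Real.exp (-2 * K * lam) * dist x y ^ 2 :=
    (pow_le_pow_left₀ hρ0 hρy 2).trans (le_mul_of_one_le_left (sq_nonneg _) hexp)
  have : M < Real.exp (-2 * K * lam) * dist x y ^ 2 / (2 * t) := by
    rw [lt_div_iff₀ (by positivity)]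
    linarith
  unfold hopfLaxCost
  linarith

theorem minDist_le_dist (hy : y ∈ minSet Ω' u K t lam x) : minDist Ω' u K t lam x ≤ dist x y :=
  csInf_le ⟨0, by rintro _ ⟨z, _, rfl⟩; exact dist_nonneg⟩ (mem_image_of_mem _ hy)

theorem le_minDist {a : ℝ} (hne : (minSet Ω' u K t lam x).Nonempty)
    (h : ∀ y ∈ minSet Ω' u K t lam x, a ≤ dist x y) : a ≤ minDist Ω' u K t lam x :=
  le_csInf (hne.image _) (by rintro _ ⟨y, hy, rfl⟩; exact h y hy)

variable (hM : ∀ a ∈ Ω', ∀ b ∈ Ω', dist (u a) (u b) ≤ M)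
include hM

theorem bddBelow_range_hopfLaxCost (ht : 0 ≤ t) (hx : x ∈ Ω') :
    BddBelow (range fun y : Ω' => hopfLaxCost u K t lam x y) :=
  ⟨-M, by rintro _ ⟨y, rfl⟩; exact neg_le_hopfLaxCost ht (hM x hx y y.2)⟩

theorem fT_le_hopfLaxCost (ht : 0 ≤ t) (hx : x ∈ Ω') (hy : y ∈ Ω') :
    fT Ω' u K t lam x ≤ hopfLaxCost u K t lam x y :=
  ciInf_le (bddBelow_range_hopfLaxCost hM ht hx) ⟨y, hy⟩

theorem fT_nonpos (ht : 0 ≤ t) (hx : x ∈ Ω') : fT Ω' u K t lam x ≤ 0 := by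
  simpa using fT_le_hopfLaxCost (lam := lam) (K := K) hM ht hx hx

theorem dist_lt_of_mem_minSet (ht : 0 < t) (hKlam : K * lam ≤ 0) (hρ : 2 * t * M < ρ ^ 2)
    (hρ0 : 0 ≤ ρ) (hx : x ∈ Ω') (hy : y ∈ minSet Ω' u K t lam x) : dist x y < ρ := by
  by_contra! hρy
  have hpos := hopfLaxCost_pos_of_le_dist ht hKlam (hM x hx y hy.1) hρ hρ0 hρy
  have := fT_nonpos (lam := lam) (K := K) hM ht.le hx
  rw [(mem_minSet_iff.mp hy).2] at this
  linarith

theorem minSet_nonempty [ProperSpace X] (hu : ContinuousOn u Ω') (ht : 0 < t)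
    (hKlam : K * lam ≤ 0) (hρ : 2 * t * M < ρ ^ 2) (hρ0 : 0 ≤ ρ) (hx : x ∈ Ω')
    (hball : closedBall x ρ ⊆ Ω') : (minSet Ω' u K t lam x).Nonempty := by
  have hcont : ContinuousOn (hopfLaxCost u K t lam x) (closedBall x ρ) := by
    unfold hopfLaxCost
    exact ContinuousOn.sub (by fun_prop)
      ((continuous_const.dist continuous_id).comp_continuousOn (hu.mono hball))
  obtain ⟨y₀, hy₀, hmin⟩ := (isCompact_closedBall x ρ).exists_isMinOn
    ⟨x, mem_closedBall_self hρ0⟩ hcont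
  have hglobal : ∀ y ∈ Ω', hopfLaxCost u K t lam x y₀ ≤ hopfLaxCost u K t lam x y := by
    intro y hy
    by_cases hyρ : y ∈ closedBall x ρ
    · exact hmin hyρ
    · have h₀ : hopfLaxCost u K t lam x y₀ ≤ 0 := by
        simpa using hmin (mem_closedBall_self hρ0)
      have := hopfLaxCost_pos_of_le_dist ht hKlam (hM x hx y hy) hρ hρ0
        (by rw [mem_closedBall'] at hyρ; linarith)
      linarith
  refine ⟨y₀, hball hy₀, le_antisymm (fT_le_hopfLaxCost hM ht.le hx (hball hy₀)) ?_⟩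
  have : Nonempty Ω' := ⟨⟨x, hx⟩⟩
  exact le_ciInf fun y => hglobal y y.2

theorem eventually_fT_lt (hΩ' : IsOpen Ω') (hu : ContinuousOn u Ω') (ht : 0 ≤ t)
    (hx : x ∈ Ω') {a : ℝ} (ha : fT Ω' u K t lam x < a) :
    ∀ᶠ p in 𝓝 (x, lam), fT Ω' u K t p.2 p.1 < a := by
  have : Nonempty Ω' := ⟨⟨x, hx⟩⟩
  obtain ⟨⟨z, hz⟩, hza⟩ := exists_lt_of_ciInf_lt ha
  have hcont : ContinuousAt (fun p : X × ℝ => hopfLaxCost u K t p.2 p.1 z) (x, lam) :=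
    (continuousAt_hopfLaxCost (hu.continuousAt (hΩ'.mem_nhds hx))
      (hu.continuousAt (hΩ'.mem_nhds hz))).comp (f := fun p : X × ℝ => (p, z)) (by fun_prop)
  filter_upwards [hcont.eventually_lt continuousAt_const hza,
    continuous_fst.continuousAt.preimage_mem_nhds (hΩ'.mem_nhds hx)] with p hpa hp
  exact (fT_le_hopfLaxCost hM ht hp hz).trans_lt hpa

theorem eventually_fT_lt_hopfLaxCost (hΩ' : IsOpen Ω') (hu : ContinuousOn u Ω') (ht : 0 ≤ t)
    (hx : x ∈ Ω') (hy : y ∈ Ω') (h : fT Ω' u K t lam x < hopfLaxCost u K t lam x y) :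
    ∀ᶠ q : (X × ℝ) × X in 𝓝 ((x, lam), y),
      fT Ω' u K t q.1.2 q.1.1 < hopfLaxCost u K t q.1.2 q.1.1 q.2 := by
  obtain ⟨a, hfa, hac⟩ := exists_between h
  have hcont := continuousAt_hopfLaxCost (K := K) (t := t) (lam := lam)
    (hu.continuousAt (hΩ'.mem_nhds hx)) (hu.continuousAt (hΩ'.mem_nhds hy))
  filter_upwards [continuous_fst.continuousAt.eventually (eventually_fT_lt hM hΩ' hu ht hx hfa),
    (continuousAt_const.eventually_lt hcont hac).mono fun _ => le_of_lt]
    with q hqf hqc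
  exact hqf.trans_le hqc

theorem lowerSemicontinuousOn_minDist [ProperSpace X] (hΩ' : IsOpen Ω')
    (hu : ContinuousOn u Ω') (ht : 0 < t) (hK : K ≤ 0) {A : Set X}
    (hball : ∀ x ∈ A, closedBall x ρ ⊆ Ω') (hρ : 2 * t * M < ρ ^ 2) (hρ0 : 0 ≤ ρ) :
    LowerSemicontinuousOn (fun p : X × ℝ => minDist Ω' u K t p.2 p.1) (A ×ˢ Ici 0) := by
  rintro ⟨x, lam⟩ ⟨hxA, hlam⟩ c hc
  have hKlam : ∀ {l : ℝ}, l ∈ Ici (0 : ℝ) → K * l ≤ 0 := mul_nonpos_of_nonpos_of_nonneg hK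
  have hx : x ∈ Ω' := hball x hxA (mem_closedBall_self hρ0)
  obtain ⟨y₀, hy₀⟩ := minSet_nonempty hM hu ht (hKlam hlam) hρ hρ0 hx (hball x hxA)
  obtain ⟨r, hcr, hrL⟩ := exists_between hc
  have hrρ : r < ρ := hrL.trans_le <| (minDist_le_dist hy₀).trans
    (dist_lt_of_mem_minSet hM ht (hKlam hlam) hρ hρ0 hx hy₀).le
  have hsub : closedBall x r ⊆ Ω' := (closedBall_subset_closedBall hrρ.le).trans (hball x hxA)
  have hsubopt : ∀ y ∈ closedBall x r, fT Ω' u K t lam x < hopfLaxCost u K t lam x y := by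
    intro y hy
    refine (fT_le_hopfLaxCost hM ht.le hx (hsub hy)).lt_of_ne fun heq => ?_
    have := minDist_le_dist (show y ∈ minSet Ω' u K t lam x from ⟨hsub hy, heq⟩)
    exact hrL.not_ge (this.trans (mem_closedBall'.mp hy))
  have hnear : ∀ᶠ p : X × ℝ in 𝓝 (x, lam),
      ∀ y ∈ closedBall x r, fT Ω' u K t p.2 p.1 < hopfLaxCost u K t p.2 p.1 y :=
    (isCompact_closedBall x r).eventually_forall_of_forall_eventually fun y hy =>
      eventually_fT_lt_hopfLaxCost hM hΩ' hu ht.le hx (hsub hy) (hsubopt y hy)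
  have hclose : ∀ᶠ p : X × ℝ in 𝓝 (x, lam), dist p.1 x < r - c :=
    (continuousAt_fst (p := (x, lam))).preimage_mem_nhds (ball_mem_nhds x (sub_pos.mpr hcr))
  filter_upwards [nhdsWithin_le_nhds hnear, nhdsWithin_le_nhds hclose, self_mem_nhdsWithin]
    with ⟨x', lam'⟩ hsubopt' hx'x ⟨hx'A, hlam'⟩
  have hne := minSet_nonempty hM hu ht (hKlam hlam') hρ hρ0
    (hball x' hx'A (mem_closedBall_self hρ0)) (hball x' hx'A)
  refine lt_of_lt_of_le (by linarith : c < r - dist x' x) (le_minDist hne fun y hy => ?_)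
  have hyr : r < dist x y := by
    by_contra! hyr
    exact (hsubopt' y (mem_closedBall'.mpr hyr)).ne hy.2
  linarith [dist_triangle x x' y, dist_comm x x']

end HopfLax

theorem stmt2_general {X Y : Type*} [MetricSpace X] [ProperSpace X] [MetricSpace Y]
    (Ω' Ω'' : Set X) (hΩ'open : IsOpen Ω')
    (u : X → Y) (hu : ContinuousOn u Ω')
    (osc : ℝ)
    (hoscBdd : BddAbove ((fun p : X × X => dist (u p.1) (u p.2)) '' (Ω' ×ˢ Ω')))
    (hosc : osc = sSup ((fun p : X × X => dist (u p.1) (u p.2)) '' (Ω' ×ˢ Ω')))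
    (K : ℝ) (hK : K ≤ 0)
    (D : ℝ) (hD : D = sInf ((fun p : X × X => dist p.1 p.2) '' (Ω'' ×ˢ Ω'ᶜ)))
    (hDpos : 0 < D)
    (Cstar t₀ : ℝ) (hC : Cstar = 2 * osc + 2) (ht₀ : t₀ = D ^ 2 / (4 * Cstar)) :
    ∀ t ∈ Ioo (0 : ℝ) t₀,
      LowerSemicontinuousOn (fun p : X × ℝ => minDist Ω' u K t p.2 p.1)
        (Ω'' ×ˢ Icc (0 : ℝ) 1) := by
  rintro t ⟨ht, htt₀⟩
  have hM : ∀ a ∈ Ω', ∀ b ∈ Ω', dist (u a) (u b) ≤ osc := fun a ha b hb =>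
    hosc ▸ le_csSup hoscBdd ⟨(a, b), mk_mem_prod ha hb, rfl⟩
  have hosc0 : 0 ≤ osc :=
    hosc ▸ Real.sSup_nonneg (by rintro _ ⟨_, _, rfl⟩; exact dist_nonneg)
  have hball : ∀ x ∈ Ω'', closedBall x (D / 2) ⊆ Ω' := by
    intro x hx z hz
    by_contra hzΩ
    have : D ≤ dist x z := hD ▸ csInf_le ⟨0, by rintro _ ⟨_, _, rfl⟩; exact dist_nonneg⟩
      ⟨(x, z), mk_mem_prod hx hzΩ, rfl⟩
    linarith [mem_closedBall'.mp hz]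
  have hρ : 2 * t * osc < (D / 2) ^ 2 := by
    have : t * Cstar < D ^ 2 / 4 := by
      rw [ht₀, lt_div_iff₀ (by rw [hC]; linarith)] at htt₀
      linarith
    nlinarith
  exact (lowerSemicontinuousOn_minDist hM hΩ'open hu ht hK hball hρ (by positivity)).mono
    (prod_mono le_rfl Icc_subset_Ici_self)

theorem stmt2 {X Y : Type*} [MetricSpace X] [ProperSpace X] [MetricSpace Y]
    (Ω' Ω'' : Set X) (hΩ'open : IsOpen Ω') (hΩ'bdd : Bornology.IsBounded Ω')
    (hΩ'ne : Ω'.Nonempty) (hΩ''open : IsOpen Ω'') (hΩ''ne : Ω''.Nonempty)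
    (hsub : Ω'' ⊆ Ω')
    (u : X → Y) (hu : ContinuousOn u Ω')
    (osc : ℝ)
    (hoscBdd : BddAbove ((fun p : X × X => dist (u p.1) (u p.2)) '' (Ω' ×ˢ Ω')))
    (hosc : osc = sSup ((fun p : X × X => dist (u p.1) (u p.2)) '' (Ω' ×ˢ Ω')))
    (K : ℝ) (hK : K ≤ 0)
    (D : ℝ) (hD : D = sInf ((fun p : X × X => dist p.1 p.2) '' (Ω'' ×ˢ Ω'ᶜ)))
    (hDpos : 0 < D)
    (Cstar t₀ : ℝ) (hC : Cstar = 2 * osc + 2) (ht₀ : t₀ = D ^ 2 / (4 * Cstar)) :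
    ∀ t ∈ Ioo (0 : ℝ) t₀,
      LowerSemicontinuousOn (fun p : X × ℝ => minDist Ω' u K t p.2 p.1)
        (Ω'' ×ˢ Icc (0 : ℝ) 1) :=
  stmt2_general Ω' Ω'' hΩ'open u hu osc hoscBdd hosc K hK D hD hDpos Cstar t₀ hC ht₀
end

section
/- The function H : (0, t̄) → ℝ defined by H(t) := (1/m(B(q,R/4))) · ∫_{B(q,R/4)} ∫_{1/4}^{3/4} v(t,x,λ) dλ dm(x) is locally Lipschitz on (0, t̄). -/
/-!
For `t ≥ a > 0`, each of the functions `t ↦ e^{-2Kλ} d(x,y)²/(2t) - d_Y(u x, u y)` (`y ∈ Ω'`)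
whose infimum is `f_t(x,λ)` is Lipschitz with constant `diam(Ω')² e^{-2Kλ}/(2a²)`. An infimum of
uniformly Lipschitz functions is Lipschitz with the same constant, and averaging in `λ` and then
in `x` preserves the bound, so `H` is Lipschitz on `[a, ∞)`. The averages are well defined because
`f_t` is bounded by the oscillation of `u` and is continuous in `λ` and, on `Ω'`, in `x`;
dominated convergence then makes the `λ`-average continuous in `x`.
-/

open Metric Filter Set Topology

open Bornology MeasureTheory Real
open scoped ENNReal

theorem ciInf_sub_ciInf_le {ι : Sort*} [Nonempty ι] {f g : ι → ℝ} {c : ℝ}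
    (hf : BddBelow (range f)) (h : ∀ i, f i - g i ≤ c) : (⨅ i, f i) - ⨅ i, g i ≤ c := by
  have : ∀ i, (⨅ i, f i) - c ≤ g i := fun i => by linarith [ciInf_le hf i, h i]
  linarith [le_ciInf this]

theorem abs_ciInf_sub_ciInf_le {ι : Sort*} [Nonempty ι] {f g : ι → ℝ} {c : ℝ}
    (hf : BddBelow (range f)) (hg : BddBelow (range g)) (h : ∀ i, |f i - g i| ≤ c) :
    |(⨅ i, f i) - ⨅ i, g i| ≤ c :=
  abs_sub_le_iff.2 ⟨ciInf_sub_ciInf_le hf fun i => (abs_sub_le_iff.1 (h i)).1,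
    ciInf_sub_ciInf_le hg fun i => (abs_sub_le_iff.1 (h i)).2⟩

theorem abs_setIntegral_sub_setIntegral_le {α : Type*} [MeasurableSpace α] {μ : Measure α}
    {s : Set α} {f g : α → ℝ} {c : ℝ} (hs : μ s < ∞) (hf : IntegrableOn f s μ)
    (hg : IntegrableOn g s μ) (h : ∀ x ∈ s, |f x - g x| ≤ c) :
    |∫ x in s, f x ∂μ - ∫ x in s, g x ∂μ| ≤ c * μ.real s := by
  rw [← integral_sub hf hg]
  exact norm_setIntegral_le_of_norm_le_const hs fun x hx => (norm_eq_abs _).trans_le (h x hx)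

theorem abs_setAverage_sub_setAverage_le {α : Type*} [MeasurableSpace α] {μ : Measure α}
    {s : Set α} {f g : α → ℝ} {c : ℝ} (hs : μ s < ∞) (hf : IntegrableOn f s μ)
    (hg : IntegrableOn g s μ) (hc : 0 ≤ c) (h : ∀ x ∈ s, |f x - g x| ≤ c) :
    |⨍ x in s, f x ∂μ - ⨍ x in s, g x ∂μ| ≤ c := by
  rw [setAverage_eq, setAverage_eq, smul_eq_mul, smul_eq_mul, ← mul_sub, abs_mul, abs_inv,
    abs_of_nonneg measureReal_nonneg]
  calc (μ.real s)⁻¹ * |∫ x in s, f x ∂μ - ∫ x in s, g x ∂μ|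
      ≤ (μ.real s)⁻¹ * (c * μ.real s) := by
        gcongr
        exact abs_setIntegral_sub_setIntegral_le hs hf hg h
    _ = c * ((μ.real s)⁻¹ * μ.real s) := by ring
    _ ≤ c := mul_le_of_le_one_right hc inv_mul_le_one

section HopfLax

variable {X Y : Type*} [MetricSpace X] [MetricSpace Y] {Ω' : Set X} {u : X → Y}
  {K t t' lam lam' : ℝ} {x x' y : X}

theorem neg_diam_image_le_sub_dist (huΩ' : IsBounded (u '' Ω')) (ht : 0 ≤ t) (hx : x ∈ Ω')
    (hy : y ∈ Ω') :
    -diam (u '' Ω') ≤ rexp (-2 * K * lam) * dist x y ^ 2 / (2 * t) - dist (u x) (u y) := by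
  have := dist_le_diam_of_mem huΩ' (mem_image_of_mem u hx) (mem_image_of_mem u hy)
  have : 0 ≤ rexp (-2 * K * lam) * dist x y ^ 2 / (2 * t) := by positivity
  linarith

theorem bddBelow_range_fT (huΩ' : IsBounded (u '' Ω')) (ht : 0 ≤ t) (hx : x ∈ Ω') :
    BddBelow (range fun y : Ω' =>
      rexp (-2 * K * lam) * dist x (y : X) ^ 2 / (2 * t) - dist (u x) (u (y : X))) :=
  ⟨-diam (u '' Ω'), forall_mem_range.2 fun y => neg_diam_image_le_sub_dist huΩ' ht hx y.2⟩

theorem abs_fT_le (huΩ' : IsBounded (u '' Ω')) (ht : 0 ≤ t) (hx : x ∈ Ω') :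
    |fT Ω' u K t lam x| ≤ diam (u '' Ω') := by
  have : Nonempty Ω' := ⟨⟨x, hx⟩⟩
  refine abs_le.2 ⟨le_ciInf fun y => neg_diam_image_le_sub_dist huΩ' ht hx y.2, ?_⟩
  calc fT Ω' u K t lam x
      ≤ rexp (-2 * K * lam) * dist x x ^ 2 / (2 * t) - dist (u x) (u x) :=
        ciInf_le (bddBelow_range_fT huΩ' ht hx) ⟨x, hx⟩
    _ = 0 := by simp
    _ ≤ diam (u '' Ω') := diam_nonneg

theorem abs_fT_sub_fT_le (hΩ' : IsBounded Ω') (huΩ' : IsBounded (u '' Ω')) (ht : 0 ≤ t)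
    (ht' : 0 ≤ t') (hx : x ∈ Ω') :
    |fT Ω' u K t lam x - fT Ω' u K t' lam' x| ≤
      diam Ω' ^ 2 / 2 * |rexp (-2 * K * lam) / t - rexp (-2 * K * lam') / t'| := by
  have : Nonempty Ω' := ⟨⟨x, hx⟩⟩
  refine abs_ciInf_sub_ciInf_le (bddBelow_range_fT huΩ' ht hx) (bddBelow_range_fT huΩ' ht' hx)
    fun y => ?_
  have hxy : dist x y ≤ diam Ω' := dist_le_diam_of_mem hΩ' hx y.2
  calc _ = |dist x y ^ 2 / 2 * (rexp (-2 * K * lam) / t - rexp (-2 * K * lam') / t')| := by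
        congr 1; ring
    _ ≤ diam Ω' ^ 2 / 2 * |rexp (-2 * K * lam) / t - rexp (-2 * K * lam') / t'| := by
        rw [abs_mul, abs_of_nonneg (by positivity : 0 ≤ dist x y ^ 2 / 2)]
        gcongr

theorem abs_fT_sub_fT_le_of_le {a : ℝ} (hΩ' : IsBounded Ω') (huΩ' : IsBounded (u '' Ω'))
    (ha : 0 < a) (hat : a ≤ t) (hat' : a ≤ t') (hx : x ∈ Ω') :
    |fT Ω' u K t lam x - fT Ω' u K t' lam x| ≤
      diam Ω' ^ 2 * rexp (-2 * K * lam) / (2 * a ^ 2) * |t - t'| := by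
  have ht : 0 < t := ha.trans_le hat
  have ht' : 0 < t' := ha.trans_le hat'
  have hatt' : a ^ 2 ≤ t * t' := by nlinarith
  have hdiff : rexp (-2 * K * lam) / t - rexp (-2 * K * lam) / t'
      = rexp (-2 * K * lam) * (t' - t) / (t * t') := by
    field_simp
  refine (abs_fT_sub_fT_le hΩ' huΩ' ht.le ht'.le hx).trans ?_
  rw [hdiff, abs_div, abs_mul, abs_of_pos (exp_pos _), abs_of_pos (mul_pos ht ht'), abs_sub_comm]
  calc diam Ω' ^ 2 / 2 * (rexp (-2 * K * lam) * |t - t'| / (t * t'))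
      ≤ diam Ω' ^ 2 / 2 * (rexp (-2 * K * lam) * |t - t'| / a ^ 2) := by gcongr
    _ = diam Ω' ^ 2 * rexp (-2 * K * lam) / (2 * a ^ 2) * |t - t'| := by ring

theorem abs_fT_sub_fT_le_of_dist (hΩ' : IsBounded Ω') (huΩ' : IsBounded (u '' Ω')) (ht : 0 ≤ t)
    (hx : x ∈ Ω') (hx' : x' ∈ Ω') :
    |fT Ω' u K t lam x - fT Ω' u K t lam x'| ≤
      rexp (-2 * K * lam) * diam Ω' / t * dist x x' + dist (u x) (u x') := by
  have : Nonempty Ω' := ⟨⟨x, hx⟩⟩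
  refine abs_ciInf_sub_ciInf_le (bddBelow_range_fT huΩ' ht hx) (bddBelow_range_fT huΩ' ht hx')
    fun y => ?_
  have hd : dist x y ≤ diam Ω' := dist_le_diam_of_mem hΩ' hx y.2
  have hd' : dist x' y ≤ diam Ω' := dist_le_diam_of_mem hΩ' hx' y.2
  have hsq : |dist x y ^ 2 - dist x' y ^ 2| ≤ 2 * diam Ω' * dist x x' := by
    rw [sq_sub_sq, abs_mul, abs_of_nonneg (by positivity : 0 ≤ dist x y + dist x' y)]
    exact mul_le_mul (by linarith) (abs_dist_sub_le x x' y) (abs_nonneg _) (by positivity)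
  calc _ = |rexp (-2 * K * lam) / (2 * t) * (dist x y ^ 2 - dist x' y ^ 2)
          - (dist (u x) (u y) - dist (u x') (u y))| := by
        congr 1; ring
    _ ≤ |rexp (-2 * K * lam) / (2 * t) * (dist x y ^ 2 - dist x' y ^ 2)|
          + |dist (u x) (u y) - dist (u x') (u y)| := abs_sub _ _
    _ = rexp (-2 * K * lam) / (2 * t) * |dist x y ^ 2 - dist x' y ^ 2|
          + |dist (u x) (u y) - dist (u x') (u y)| := by
        rw [abs_mul, abs_of_nonneg (by positivity : 0 ≤ rexp (-2 * K * lam) / (2 * t))]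
    _ ≤ rexp (-2 * K * lam) / (2 * t) * (2 * diam Ω' * dist x x') + dist (u x) (u x') := by
        gcongr
        exact abs_dist_sub_le _ _ _
    _ = rexp (-2 * K * lam) * diam Ω' / t * dist x x' + dist (u x) (u x') := by ring

theorem continuous_fT_lam (hΩ' : IsBounded Ω') (huΩ' : IsBounded (u '' Ω')) (ht : 0 ≤ t)
    (hx : x ∈ Ω') : Continuous fun lam => fT Ω' u K t lam x := by
  refine continuous_iff_continuousAt.2 fun lam₀ => tendsto_iff_dist_tendsto_zero.2 <|
    squeeze_zero (fun _ => dist_nonneg) (fun lam => abs_fT_sub_fT_le hΩ' huΩ' ht ht hx) ?_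
  have : Continuous fun lam =>
      diam Ω' ^ 2 / 2 * |rexp (-2 * K * lam) / t - rexp (-2 * K * lam₀) / t| := by
    fun_prop
  simpa using this.tendsto lam₀

theorem continuousOn_fT (hΩ' : IsBounded Ω') (huΩ' : IsBounded (u '' Ω'))
    (hu : ContinuousOn u Ω') (ht : 0 ≤ t) : ContinuousOn (fT Ω' u K t lam) Ω' := by
  intro x₀ hx₀
  refine tendsto_iff_dist_tendsto_zero.2 <|
    squeeze_zero' (Eventually.of_forall fun _ => dist_nonneg)
      (eventually_nhdsWithin_of_forall fun x hx => abs_fT_sub_fT_le_of_dist hΩ' huΩ' ht hx hx₀) ?_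
  have hdist : Tendsto (fun x => dist x x₀) (𝓝[Ω'] x₀) (𝓝 0) :=
    tendsto_iff_dist_tendsto_zero.1 (tendsto_nhdsWithin_of_tendsto_nhds tendsto_id)
  have hdist_u : Tendsto (fun x => dist (u x) (u x₀)) (𝓝[Ω'] x₀) (𝓝 0) :=
    tendsto_iff_dist_tendsto_zero.1 (hu x₀ hx₀)
  simpa using (hdist.const_mul _).add hdist_u

variable {lam₁ lam₂ : ℝ}

theorem continuousOn_integral_fT (hΩ' : IsBounded Ω') (huΩ' : IsBounded (u '' Ω'))
    (hu : ContinuousOn u Ω') (ht : 0 ≤ t) :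
    ContinuousOn (fun x => ∫ lam in Icc lam₁ lam₂, fT Ω' u K t lam x) Ω' :=
  continuousOn_of_dominated (bound := fun _ => diam (u '' Ω'))
    (fun _ hx => (continuous_fT_lam hΩ' huΩ' ht hx).aestronglyMeasurable)
    (fun _ hx => Eventually.of_forall fun _ => abs_fT_le huΩ' ht hx) (integrable_const _)
    (Eventually.of_forall fun _ => continuousOn_fT hΩ' huΩ' hu ht)

theorem integrableOn_integral_fT [MeasurableSpace X] [OpensMeasurableSpace X] {m : Measure X}
    {S : Set X} (hS : MeasurableSet S) (hSΩ' : S ⊆ Ω') (hmS : m S < ∞) (hΩ' : IsBounded Ω')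
    (huΩ' : IsBounded (u '' Ω')) (hu : ContinuousOn u Ω') (ht : 0 ≤ t) :
    IntegrableOn (fun x => ∫ lam in Icc lam₁ lam₂, fT Ω' u K t lam x) S m :=
  .of_bound hmS (((continuousOn_integral_fT hΩ' huΩ' hu ht).mono hSΩ').aestronglyMeasurable hS)
    (diam (u '' Ω') * volume.real (Icc lam₁ lam₂)) <| ae_restrict_of_forall_mem hS fun _ hx =>
      norm_setIntegral_le_of_norm_le_const measure_Icc_lt_top fun _ _ => abs_fT_le huΩ' ht (hSΩ' hx)

theorem abs_integral_fT_sub_integral_fT_le {a E : ℝ} (hΩ' : IsBounded Ω')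
    (huΩ' : IsBounded (u '' Ω')) (hE : ∀ lam ∈ Icc lam₁ lam₂, rexp (-2 * K * lam) ≤ E) (ha : 0 < a)
    (hat : a ≤ t) (hat' : a ≤ t') (hx : x ∈ Ω') :
    |(∫ lam in Icc lam₁ lam₂, fT Ω' u K t lam x) - ∫ lam in Icc lam₁ lam₂, fT Ω' u K t' lam x| ≤
      diam Ω' ^ 2 * E / (2 * a ^ 2) * |t - t'| * volume.real (Icc lam₁ lam₂) :=
  abs_setIntegral_sub_setIntegral_le (c := diam Ω' ^ 2 * E / (2 * a ^ 2) * |t - t'|)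
    measure_Icc_lt_top (continuous_fT_lam hΩ' huΩ' (ha.le.trans hat) hx).integrableOn_Icc
    (continuous_fT_lam hΩ' huΩ' (ha.le.trans hat') hx).integrableOn_Icc fun lam hlam =>
      (abs_fT_sub_fT_le_of_le hΩ' huΩ' ha hat hat' hx).trans (by gcongr; exact hE lam hlam)

theorem exp_neg_two_mul_mul_le_of_mem_Icc (hlam : lam ∈ Icc lam₁ lam₂) :
    rexp (-2 * K * lam) ≤ rexp (2 * |K| * max |lam₁| |lam₂|) := by
  have hlam_abs : |lam| ≤ max |lam₁| |lam₂| := abs_le_max_abs_abs hlam.1 hlam.2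
  refine exp_le_exp.2 ?_
  calc -2 * K * lam = -(2 * K * lam) := by ring
    _ ≤ |2 * K * lam| := neg_le_abs _
    _ = 2 * |K| * |lam| := by simp [abs_mul]
    _ ≤ 2 * |K| * max |lam₁| |lam₂| := by gcongr

theorem exists_lipschitzOnWith_setAverage_integral_fT [MeasurableSpace X] [OpensMeasurableSpace X]
    {m : Measure X} {S : Set X} {a : ℝ} (hS : MeasurableSet S) (hSΩ' : S ⊆ Ω') (hmS : m S < ∞)
    (hΩ' : IsBounded Ω') (huΩ' : IsBounded (u '' Ω')) (hu : ContinuousOn u Ω') (ha : 0 < a) :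
    ∃ C : NNReal, LipschitzOnWith C
      (fun t => ⨍ x in S, (∫ lam in Icc lam₁ lam₂, fT Ω' u K t lam x) ∂m) (Ici a) := by
  refine ⟨_, LipschitzOnWith.of_dist_le' (K := diam Ω' ^ 2 * rexp (2 * |K| * max |lam₁| |lam₂|) /
    (2 * a ^ 2) * volume.real (Icc lam₁ lam₂)) fun t ht t' ht' => ?_⟩
  rw [dist_eq, dist_eq]
  exact abs_setAverage_sub_setAverage_le hmS
    (integrableOn_integral_fT hS hSΩ' hmS hΩ' huΩ' hu (ha.le.trans ht))
    (integrableOn_integral_fT hS hSΩ' hmS hΩ' huΩ' hu (ha.le.trans ht')) (by positivity)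
    fun x hx => (abs_integral_fT_sub_integral_fT_le hΩ' huΩ'
      (fun _ => exp_neg_two_mul_mul_le_of_mem_Icc) ha ht ht' (hSΩ' hx)).trans_eq (by ring)

end HopfLax

open MeasureTheory in
theorem stmt7_general {X Y : Type*} [MetricSpace X] [MetricSpace Y]
    [MeasurableSpace X] [BorelSpace X]
    (Ω' : Set X) (hΩ'bdd : Bornology.IsBounded Ω')
    (q : X) (R : ℝ) (hR0 : 0 < R)
    (hball : closedBall q (2 * R) ⊆ Ω')
    (u : X → Y) (hu : ContinuousOn u Ω')
    (hoscBdd : BddAbove ((fun p : X × X => dist (u p.1) (u p.2)) '' (Ω' ×ˢ Ω')))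
    (K : ℝ)
    (tbar : ℝ)
    (m : Measure X)
    (hmfin' : m (ball q (R / 4)) < ⊤)
    (v : ℝ → X → ℝ → ℝ) (hv : ∀ t x lam, v t x lam = -fT Ω' u K t lam x)
    (H : ℝ → ℝ)
    (hH : ∀ t, H t = ((m (ball q (R / 4))).toReal)⁻¹ *
      ∫ x in ball q (R / 4), (∫ lam in Icc (1/4 : ℝ) (3/4), v t x lam) ∂m) :
    ∀ t ∈ Ioo (0 : ℝ) tbar, ∃ ε > (0 : ℝ), ∃ c : NNReal,
      LipschitzOnWith c H (Ioo (0 : ℝ) tbar ∩ ball t ε) := by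
  have hu_bdd : IsBounded (u '' Ω') := by
    obtain ⟨C, hC⟩ := hoscBdd
    refine isBounded_iff.2 ⟨C, ?_⟩
    rintro _ ⟨a, ha, rfl⟩ _ ⟨b, hb, rfl⟩
    exact hC ⟨(a, b), ⟨ha, hb⟩, rfl⟩
  have hS : ball q (R / 4) ⊆ Ω' :=
    ball_subset_closedBall.trans ((closedBall_subset_closedBall (by linarith)).trans hball)
  have hH_eq : H = -fun t => ⨍ x in ball q (R / 4),
      (∫ lam in Icc (1/4 : ℝ) (3/4), fT Ω' u K t lam x) ∂m := by
    funext t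
    simp [hH, hv, integral_neg, setAverage_eq, measureReal_def]
  intro t ht
  obtain ⟨C, hC⟩ := exists_lipschitzOnWith_setAverage_integral_fT measurableSet_ball hS hmfin'
    hΩ'bdd hu_bdd hu (half_pos ht.1)
  refine ⟨t / 2, half_pos ht.1, C, hH_eq ▸ hC.neg.mono ?_⟩
  rintro s ⟨-, hs⟩
  rw [mem_ball, dist_eq, abs_sub_lt_iff] at hs
  exact mem_Ici.2 (by linarith)

open MeasureTheory in
theorem stmt7 {X Y : Type*} [MetricSpace X] [ProperSpace X] [MetricSpace Y]
    [MeasurableSpace X] [BorelSpace X]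
    (Ω' : Set X) (hΩ'open : IsOpen Ω') (hΩ'bdd : Bornology.IsBounded Ω')
    (hΩ'ne : Ω'.Nonempty)
    (q : X) (R : ℝ) (hR0 : 0 < R) (hR1 : R ≤ 1)
    (hball : closedBall q (2 * R) ⊆ Ω')
    (u : X → Y) (hu : ContinuousOn u Ω')
    (osc : ℝ)
    (hoscBdd : BddAbove ((fun p : X × X => dist (u p.1) (u p.2)) '' (Ω' ×ˢ Ω')))
    (hosc : osc = sSup ((fun p : X × X => dist (u p.1) (u p.2)) '' (Ω' ×ˢ Ω')))
    (K : ℝ) (hK : K ≤ 0)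
    (D : ℝ)
    (hD : D = sInf ((fun p : X × X => dist p.1 p.2) '' (ball q (2 * R) ×ˢ Ω'ᶜ)))
    (hDpos : 0 < D)
    (Cstar t₀ tbar : ℝ) (hC : Cstar = 2 * osc + 2) (ht₀ : t₀ = D ^ 2 / (4 * Cstar))
    (htbar : tbar = min t₀ (R ^ 2 / (64 + 64 * osc)))
    (m : Measure X) (hmfin : ∀ s : Set X, Bornology.IsBounded s → m s < ⊤)
    (hmpos : 0 < m (ball q (R / 4))) (hmfin' : m (ball q (R / 4)) < ⊤)
    (v : ℝ → X → ℝ → ℝ) (hv : ∀ t x lam, v t x lam = -fT Ω' u K t lam x)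
    (H : ℝ → ℝ)
    (hH : ∀ t, H t = ((m (ball q (R / 4))).toReal)⁻¹ *
      ∫ x in ball q (R / 4), (∫ lam in Icc (1/4 : ℝ) (3/4), v t x lam) ∂m) :
    ∀ t ∈ Ioo (0 : ℝ) tbar, ∃ ε > (0 : ℝ), ∃ c : NNReal,
      LipschitzOnWith c H (Ioo (0 : ℝ) tbar ∩ ball t ε) :=
  stmt7_general Ω' hΩ'bdd q R hR0 hball u hu hoscBdd K tbar m hmfin' v hv H hH
end
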